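/- There is a constant c > 0 such that for every z in the upper half plane H and every real x, |φ_x(z) − z|² ≤ c/(1 + Im z)² whenever |x − Re z| ≤ 2, and hence ∫_{−∞}^{∞} |φ_x(z) − z|² dx ≤ c/(1 + Im z) for all z ∈ H. -/

import Mathlib

open MeasureTheory Real

noncomputable def upperSqrt (w : ℂ) : ℂ :=
  if 0 < (w ^ (1/2 : ℂ)).im then w ^ (1/2 : ℂ) else -(w ^ (1/2 : ℂ))

noncomputable def slitMap (x : ℝ) (z : ℂ) : ℂ :=
  (x : ℂ) + upperSqrt ((z - (x : ℂ)) ^ 2 - 1)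

lemma upperSqrt_im_nonneg (w : ℂ) : 0 ≤ (upperSqrt w).im := by
  unfold upperSqrt
  split
  · linarith [show (0:ℝ) < (w ^ (1/2 : ℂ)).im from by assumption]
  · simp only [Complex.neg_im]
    linarith [show ¬ (0:ℝ) < (w ^ (1/2 : ℂ)).im from by assumption]

lemma upperSqrt_sq (w : ℂ) (hw : w ≠ 0) : (upperSqrt w) ^ 2 = w := by
  have h : (w ^ (1/2 : ℂ)) ^ 2 = w := by
    rw [sq, ← Complex.cpow_add _ _ hw]
    norm_num
  unfold upperSqrt
  split
  · exact h
  · rw [neg_sq]; exact h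

lemma slit_pointwise (x : ℝ) (z : ℂ) (hz : 0 < z.im) :
    (‖slitMap x z - z‖) ^ 2 ≤ 500 / ((x - z.re) ^ 2 + (1 + z.im) ^ 2) := by
  set w : ℂ := z - (x : ℂ) with hw
  have hwim : w.im = z.im := by simp [hw]
  have hwre : w.re = z.re - x := by simp [hw]
  have hwim' : 0 < w.im := by rw [hwim]; exact hz
  have hv : w ^ 2 - 1 ≠ 0 := by
    intro h
    have h1 := congrArg Complex.re h
    have h2 := congrArg Complex.im h
    simp [sq, Complex.mul_re, Complex.mul_im] at h1 h2
    nlinarith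
  set s := upperSqrt (w ^ 2 - 1) with hs
  have hsq : s ^ 2 = w ^ 2 - 1 := upperSqrt_sq _ hv
  have hsim : 0 ≤ s.im := upperSqrt_im_nonneg _
  have heq : slitMap x z - z = s - w := by
    simp only [slitMap, ← hs, ← hw]
    ring
  rw [heq]
  -- re s * re w ≥ 0
  have him2 : s.re * s.im = w.re * w.im := by
    have h := congrArg Complex.im hsq
    simp [sq, Complex.mul_im] at h
    linarith
  have hrere : 0 ≤ s.re * w.re := by
    rcases eq_or_lt_of_le hsim with h0 | h0
    · have hwre0 : w.re = 0 := by
        have hclaim : w.re * w.im = 0 := by rw [← him2, ← h0, mul_zero]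
        rcases mul_eq_zero.mp hclaim with h | h
        · exact h
        · exact absurd h (ne_of_gt hwim')
      simp [hwre0]
    · have hsre : s.re = w.re * w.im / s.im := by
        field_simp
        linarith [him2]
      rw [hsre]
      rw [div_mul_eq_mul_div]
      apply div_nonneg _ (le_of_lt h0)
      nlinarith [sq_nonneg w.re]
  have hprod : (s - w) * (s + w) = -1 := by linear_combination hsq
  have hAB : ‖s - w‖ * ‖s + w‖ = 1 := by
    rw [← norm_mul, hprod]
    simp
  have hB2 : w.re ^ 2 + w.im ^ 2 ≤ (‖s + w‖) ^ 2 := by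
    rw [Complex.sq_norm, Complex.normSq_apply]
    simp only [Complex.add_re, Complex.add_im]
    nlinarith [sq_nonneg s.re, sq_nonneg s.im, mul_nonneg hsim (le_of_lt hwim')]
  have hA2B2 : (‖s - w‖) ^ 2 * (‖s + w‖) ^ 2 = 1 := by
    rw [← mul_pow, hAB, one_pow]
  have hAnn : 0 ≤ (‖s - w‖) ^ 2 := sq_nonneg _
  have hup : (‖s - w‖) ^ 2 * (w.re ^ 2 + w.im ^ 2) ≤ 1 := by
    nlinarith
  have hcrude : (‖s - w‖) ^ 2 ≤ 4 * (w.re ^ 2 + w.im ^ 2) + 2 := by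
    have h1 : ‖s - w‖ ≤ ‖s‖ + ‖w‖ := by
      simpa using norm_sub_le s w
    have h2 : (‖s‖) ^ 2 ≤ (‖w‖) ^ 2 + 1 := by
      have hh : (‖s‖) ^ 2 = ‖w ^ 2 - 1‖ := by
        rw [← norm_pow, hsq]
      rw [hh]
      have ht := norm_sub_le (w ^ 2) (1 : ℂ)
      simp only [norm_one] at ht
      calc ‖w ^ 2 - 1‖ ≤ ‖w ^ 2‖ + 1 := ht
        _ = ‖w‖ ^ 2 + 1 := by rw [norm_pow]
    have h3 : (‖w‖) ^ 2 = w.re ^ 2 + w.im ^ 2 := by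
      rw [Complex.sq_norm, Complex.normSq_apply]; ring
    nlinarith [norm_nonneg (s - w), norm_nonneg s, norm_nonneg w,
      sq_nonneg (‖s‖ - ‖w‖), sq_nonneg (‖s‖ + ‖w‖),
      mul_nonneg (norm_nonneg (s - w)) (add_nonneg (norm_nonneg s) (norm_nonneg w))]
  have hT : w.re ^ 2 = (x - z.re) ^ 2 := by rw [hwre]; ring
  rw [hT] at hup hcrude
  rw [hwim] at hup hcrude
  set T := (x - z.re) ^ 2 with hTdef
  have hTnn : 0 ≤ T := sq_nonneg _
  have hdpos : 0 < T + (1 + z.im) ^ 2 := by positivity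
  rw [le_div_iff₀ hdpos]
  rcases le_or_gt 1 z.im with hb | hb
  · nlinarith [sq_nonneg (z.im - 1), mul_nonneg hAnn hTnn]
  · rcases le_or_gt T 4 with hT4 | hT4
    · nlinarith [sq_nonneg z.im, mul_nonneg hAnn hTnn, sq_nonneg (1 + z.im)]
    · nlinarith [mul_nonneg hAnn hTnn, sq_nonneg z.im]

lemma integ (a c : ℝ) (hc : 0 < c) :
    Integrable (fun x : ℝ => ((x - a) ^ 2 + c ^ 2)⁻¹) ∧
    (∫ x : ℝ, ((x - a) ^ 2 + c ^ 2)⁻¹) = π / c := by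
  have key : ∀ x : ℝ, (x ^ 2 + c ^ 2)⁻¹ = c⁻¹ * c⁻¹ * (1 + (x / c) ^ 2)⁻¹ := by
    intro x
    have hc' : c ≠ 0 := ne_of_gt hc
    field_simp
    ring
  have hint : Integrable (fun x : ℝ => (x ^ 2 + c ^ 2)⁻¹) := by
    simp_rw [key]
    exact (integrable_inv_one_add_sq.comp_div (ne_of_gt hc)).const_mul _
  constructor
  · exact hint.comp_sub_right a
  · have h1 : (∫ x : ℝ, ((x - a) ^ 2 + c ^ 2)⁻¹) = ∫ x : ℝ, (x ^ 2 + c ^ 2)⁻¹ :=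
      integral_sub_right_eq_self (fun y : ℝ => (y ^ 2 + c ^ 2)⁻¹) a
    rw [h1]
    simp_rw [key]
    rw [integral_const_mul,
      MeasureTheory.Measure.integral_comp_div (fun y : ℝ => (1 + y ^ 2)⁻¹) c,
      integral_univ_inv_one_add_sq, smul_eq_mul, abs_of_pos hc]
    field_simp

theorem slitMap_near_and_integrated_bound :
    ∃ c > (0 : ℝ),
      (∀ (x : ℝ) (z : ℂ), 0 < z.im → |x - z.re| ≤ 2 →
        (‖slitMap x z - z‖) ^ 2 ≤ c / (1 + z.im) ^ 2) ∧
      (∀ z : ℂ, 0 < z.im →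
        (∫ x : ℝ, (‖slitMap x z - z‖) ^ 2) ≤ c / (1 + z.im)) := by
  refine ⟨1600, by norm_num, ?_, ?_⟩
  · intro x z hz _
    have h := slit_pointwise x z hz
    have hd : 0 < (x - z.re) ^ 2 + (1 + z.im) ^ 2 := by positivity
    have h2 : 500 / ((x - z.re) ^ 2 + (1 + z.im) ^ 2) ≤ 1600 / (1 + z.im) ^ 2 := by
      rw [div_le_div_iff₀ hd (by positivity)]
      nlinarith [sq_nonneg (x - z.re), sq_nonneg (1 + z.im)]
    linarith
  · intro z hz
    have hc : 0 < 1 + z.im := by linarith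
    obtain ⟨hint, hval⟩ := integ z.re (1 + z.im) hc
    have hmono : (∫ x : ℝ, (‖slitMap x z - z‖) ^ 2)
        ≤ ∫ x : ℝ, 500 * ((x - z.re) ^ 2 + (1 + z.im) ^ 2)⁻¹ := by
      apply integral_mono_of_nonneg
      · exact Filter.Eventually.of_forall fun x => by positivity
      · exact hint.const_mul 500
      · refine Filter.Eventually.of_forall fun x => ?_
        have h := slit_pointwise x z hz
        rw [div_eq_mul_inv] at h
        exact h
    rw [integral_const_mul, hval] at hmono
    have hpi : 500 * (π / (1 + z.im)) ≤ 1600 / (1 + z.im) := by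
      rw [mul_div_assoc', div_le_div_iff₀ hc hc]
      nlinarith [Real.pi_lt_d2]
    linarith
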